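/- arXiv:0801.1265 — 5 statements merged into one kernel-verified Lean document; each statement's English description precedes it below -/
import Mathlib

section
/- Let N ≥ 1 and let M be a nonempty set of linear previsions on ℒ(𝒳^N) such that the lower envelope P(f) := min{P'(f) : P' ∈ M} is attained for every gamble f on 𝒳^N. Then P is exchangeable if and only if every linear prevision in M is exchangeable. -/
open Finset Filter Topology

/-- A coherent lower prevision on the gambles over a finite nonempty space `Ω`. -/
def LowerPrevCoherent {Ω : Type*} [Fintype Ω] [Nonempty Ω] (P : (Ω → ℝ) → ℝ) : Prop :=
  (∀ f : Ω → ℝ, sInf (Set.range f) ≤ P f) ∧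
  (∀ (f : Ω → ℝ) (l : ℝ), 0 ≤ l → P (fun ω => l * f ω) = l * P f) ∧
  (∀ f g : Ω → ℝ, P f + P g ≤ P (f + g))

/-- A linear prevision on the gambles over a finite nonempty space `Ω`. -/
def LinearPrevision {Ω : Type*} [Fintype Ω] [Nonempty Ω] (P : (Ω → ℝ) → ℝ) : Prop :=
  (∀ f g : Ω → ℝ, P (f + g) = P f + P g) ∧
  (∀ (l : ℝ) (f : Ω → ℝ), P (fun ω => l * f ω) = l * P f) ∧
  (∀ f : Ω → ℝ, (∀ ω, 0 ≤ f ω) → 0 ≤ P f) ∧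
  P (fun _ => 1) = 1

/-- Exchangeability of a lower prevision on gambles on `X^N`:
`P (πf − f) ≥ 0` for every gamble `f` and every permutation `π`. -/
def Exchangeable {X : Type*} {N : ℕ} (P : ((Fin N → X) → ℝ) → ℝ) : Prop :=
  ∀ (f : (Fin N → X) → ℝ) (π : Equiv.Perm (Fin N)),
    0 ≤ P (fun x => f (fun k => x (π k)) - f x)

/-- The set of count vectors `𝒩^n`. -/
abbrev CVec (X : Type*) [Fintype X] (n : ℕ) : Type _ := {m : X → ℕ // ∑ x, m x = n}

noncomputable instance {X : Type*} [Fintype X] [DecidableEq X] (n : ℕ) : Fintype (CVec X n) := by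
  have key : ∀ (m : CVec X n) (x : X), m.1 x < n + 1 := by
    intro m x
    have h1 : m.1 x ≤ ∑ y, m.1 y :=
      Finset.single_le_sum (fun i _ => Nat.zero_le _) (Finset.mem_univ x)
    have h2 := m.2
    omega
  exact Fintype.ofInjective (fun m : CVec X n => fun x => (⟨m.1 x, key m x⟩ : Fin (n+1)))
    (fun a b hab => Subtype.ext (funext fun x => congrArg Fin.val (congrFun hab x)))

instance {X : Type*} [Fintype X] [DecidableEq X] [Nonempty X] (n : ℕ) :
    Nonempty (CVec X n) :=
  ⟨⟨fun x => if x = Classical.arbitrary X then n else 0, by simp⟩⟩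

/-- The counting map `T^n : X^n → 𝒩^n`. -/
def countMap {X : Type*} [Fintype X] [DecidableEq X] (n : ℕ) (z : Fin n → X) : CVec X n :=
  ⟨fun x => (Finset.univ.filter fun k => z k = x).card, by
    have h := Finset.card_eq_sum_card_fiberwise (f := z) (s := Finset.univ) (t := Finset.univ)
      (fun k _ => Finset.mem_univ (z k))
    simpa using h.symm⟩

/-- `ν(m) = n!/∏ₓ mₓ!` for a count vector `m ∈ 𝒩^n`. -/
def nu {X : Type*} [Fintype X] {n : ℕ} (m : CVec X n) : ℕ :=
  Nat.multinomial Finset.univ m.1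

/-- `ν(μ − m)`, which is `0` unless `m ≤ μ` componentwise. -/
def nuSub {X : Type*} [Fintype X] {n k : ℕ} (μ : CVec X (n + k)) (m : CVec X n) : ℕ :=
  if ∀ x, m.1 x ≤ μ.1 x then Nat.multinomial Finset.univ (fun x => μ.1 x - m.1 x) else 0

/-- The multiple hyper-geometric prevision `MuHy^n(f|m) = (1/ν(m)) ∑_{z∈[m]} f(z)`. -/
noncomputable def MuHy {X : Type*} [Fintype X] [DecidableEq X] {n : ℕ}
    (f : (Fin n → X) → ℝ) (m : CVec X n) : ℝ :=
  (∑ z ∈ Finset.univ.filter fun z : Fin n → X => countMap n z = m, f z) / (nu m : ℝ)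

/-- The `X`-simplex `Σ_X`, as a subtype of `X → ℝ`. -/
abbrev SimplexPt (X : Type*) [Fintype X] : Type _ :=
  {θ : X → ℝ // (∀ x, 0 ≤ θ x) ∧ ∑ x, θ x = 1}

/-- The Bernstein basis polynomial `B_m(θ) = ν(m) ∏ₓ θₓ^{mₓ}`. -/
noncomputable def Bern {X : Type*} [Fintype X] {n : ℕ} (m : CVec X n) (θ : X → ℝ) : ℝ :=
  (nu m : ℝ) * ∏ x, θ x ^ m.1 x

/-- The count multinomial expectation `CoMn^n(g|θ) = ∑_m g(m) B_m(θ)`. -/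
noncomputable def CoMn {X : Type*} [Fintype X] [DecidableEq X] {n : ℕ} (g : CVec X n → ℝ) (θ : X → ℝ) : ℝ :=
  ∑ m : CVec X n, g m * Bern m θ

/-- The multinomial expectation `Mn^n(f|θ) = ∑_z f(z) ∏ₓ θₓ^{Tₓ(z)}`. -/
noncomputable def Mn {X : Type*} [Fintype X] [DecidableEq X] {n : ℕ}
    (f : (Fin n → X) → ℝ) (θ : X → ℝ) : ℝ :=
  ∑ z : Fin n → X, f z * ∏ x, θ x ^ (countMap n z).1 x

/-- `CoMn^n(g|·)` as a function on the simplex. -/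
noncomputable def CoMnP {X : Type*} [Fintype X] [DecidableEq X] {n : ℕ} (g : CVec X n → ℝ)
    (θ : SimplexPt X) : ℝ :=
  CoMn g θ.1

/-- `Mn^n(f|·)` as a function on the simplex. -/
noncomputable def MnP {X : Type*} [Fintype X] [DecidableEq X] {n : ℕ}
    (f : (Fin n → X) → ℝ) (θ : SimplexPt X) : ℝ :=
  Mn f θ.1

/-- Polynomial gambles on the simplex: the set `𝒱(Σ_X)`. -/
def IsPolyGamble {X : Type*} [Fintype X] [DecidableEq X] (p : SimplexPt X → ℝ) : Prop :=
  ∃ n : ℕ, 1 ≤ n ∧ ∃ g : CVec X n → ℝ, p = fun θ => CoMnP g θ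

/-- Coherence of a functional on the linear space `𝒱(Σ_X)` of polynomial gambles. -/
def CoherentOnPoly {X : Type*} [Fintype X] [DecidableEq X] (S : (SimplexPt X → ℝ) → ℝ) : Prop :=
  (∀ p, IsPolyGamble p → sInf (Set.range p) ≤ S p) ∧
  (∀ p, IsPolyGamble p → ∀ l : ℝ, 0 ≤ l → S (fun θ => l * p θ) = l * S p) ∧
  (∀ p q, IsPolyGamble p → IsPolyGamble q → S p + S q ≤ S (p + q))

/-- Cylindrical extension of a gamble on `X^n` to `X^{n+k}`. -/
def cylExt {X : Type*} {n k : ℕ} (f : (Fin n → X) → ℝ) : (Fin (n + k) → X) → ℝ :=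
  fun z => f fun i => z (Fin.castLE (Nat.le_add_right n k) i)

/-- Time consistency of a family of lower previsions on the `X^n`. -/
def PTimeConsistent {X : Type*} (P : ∀ n : ℕ, ((Fin n → X) → ℝ) → ℝ) : Prop :=
  ∀ n : ℕ, 1 ≤ n → ∀ (k : ℕ) (f : (Fin n → X) → ℝ), P n f = P (n + k) (cylExt f)

/-- Time consistency of a family of count lower previsions on the `𝒩^n`. -/
def QTimeConsistent {X : Type*} [Fintype X] [DecidableEq X] (Q : ∀ n : ℕ, (CVec X n → ℝ) → ℝ) : Prop :=
  ∀ n : ℕ, 1 ≤ n → ∀ (k : ℕ) (h : CVec X n → ℝ),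
    Q n h = Q (n + k) (fun μ => ∑ m : CVec X n, ((nuSub μ m : ℝ) * (nu m : ℝ) / (nu μ : ℝ)) * h m)

/-- The relative frequency vector `m/n ∈ Σ_X` of a count vector `m ∈ 𝒩^n`, `n ≥ 1`. -/
noncomputable def freqPt {X : Type*} [Fintype X] {n : ℕ} (hn : 0 < n) (m : CVec X n) :
    SimplexPt X :=
  ⟨fun x => (m.1 x : ℝ) / n,
   fun x => div_nonneg (Nat.cast_nonneg _) (Nat.cast_nonneg _),
   by
    rw [← Finset.sum_div]
    have h : (∑ x, (m.1 x : ℝ)) = (n : ℝ) := by exact_mod_cast m.2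
    rw [h]
    exact div_self (Nat.cast_ne_zero.mpr hn.ne')⟩

/-- `ḡ(μ) = ∑_m (ν(m) ν(μ−m) / ν(μ)) g(m)`. -/
noncomputable def gbar {X : Type*} [Fintype X] [DecidableEq X] {n k : ℕ}
    (g : CVec X n → ℝ) (μ : CVec X (n + k)) : ℝ :=
  ∑ m : CVec X n, ((nu m : ℝ) * (nuSub μ m : ℝ) / (nu μ : ℝ)) * g m

theorem le_iff_forall_le_of_isLeast_image {ι α : Type*} [Preorder α] {M : Set ι} {v : ι → α}
    {a b : α} (h : IsLeast (v '' M) a) : b ≤ a ↔ ∀ i ∈ M, b ≤ v i := by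
  rw [le_isGLB_iff h.isGLB, mem_lowerBounds, Set.forall_mem_image]

theorem stmt1_general {X : Type*} {N : ℕ}
    (M : Set (((Fin N → X) → ℝ) → ℝ))
    (P : ((Fin N → X) → ℝ) → ℝ)
    (hP : ∀ f : (Fin N → X) → ℝ, IsLeast ((fun P' => P' f) '' M) (P f)) :
    Exchangeable P ↔ ∀ P' ∈ M, Exchangeable P' := by
  simp only [Exchangeable, le_iff_forall_le_of_isLeast_image (hP _)]
  exact ⟨fun h P' hP' f π => h f π P' hP', fun h f π P' hP' => h P' hP' f π⟩

/-- A lower envelope (attained) of a nonempty set of linear previsions is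
exchangeable iff all the linear previsions in the set are exchangeable. -/
theorem stmt1 {X : Type*} [Fintype X] [DecidableEq X] [Nonempty X] {N : ℕ} (hN : 1 ≤ N)
    (M : Set (((Fin N → X) → ℝ) → ℝ)) (hM : M.Nonempty)
    (hlin : ∀ P' ∈ M, LinearPrevision P')
    (P : ((Fin N → X) → ℝ) → ℝ)
    (hP : ∀ f : (Fin N → X) → ℝ, IsLeast ((fun P' => P' f) '' M) (P f)) :
    Exchangeable P ↔ ∀ P' ∈ M, Exchangeable P' :=
  stmt1_general M P hP
end

section
/- Let N ≥ 1 and let P be a coherent exchangeable lower prevision on ℒ(𝒳^N), with count distribution Q on ℒ(𝒩^N) defined by Q(h) := P(h∘T^N). Then for every gamble f on 𝒳^N: P(f) = Q(m ↦ MuHy^N(f|m)). -/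
open Finset Filter Topology

/-!
Averaging `f` over all `N!` permutations of the coordinates gives the gamble
`z ↦ MuHy f (T z)`, since every point of the invariant atom `[T z]` is reached by exactly
`∏ₓ (T z)ₓ!` permutations of `z`. Exchangeability makes `P (f ∘ π - f) ≥ 0` for every `π`, so
by superadditivity and homogeneity `P (MuHy f ∘ T - f) ≥ 0`; applied to `-f` as well, this
squeezes `P f = P (MuHy f ∘ T) = Q (MuHy f)`.
-/

section Counting

variable {X : Type*} [Fintype X] [DecidableEq X] {N : ℕ}

lemma countMap_comp_perm (z : Fin N → X) (π : Equiv.Perm (Fin N)) :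
    countMap N (z ∘ π) = countMap N z := by
  apply Subtype.ext
  funext x
  simp only [countMap]
  exact Finset.card_equiv π (by simp)

def permCompEqEquiv (z z' : Fin N → X) :
    {π : Equiv.Perm (Fin N) // z ∘ π = z'} ≃ (∀ x : X, {k // z' k = x} ≃ {k // z k = x}) where
  toFun π x := Equiv.subtypeEquiv π.1 fun k => by rw [← congrFun π.2 k]; rfl
  invFun E := ⟨(Equiv.sigmaFiberEquiv z').symm.trans
      ((Equiv.sigmaCongrRight E).trans (Equiv.sigmaFiberEquiv z)),
    funext fun k => (E (z' k) ⟨k, rfl⟩).2⟩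
  left_inv _ := Subtype.ext (Equiv.ext fun _ => rfl)
  right_inv E := funext fun _ => Equiv.ext fun ⟨_, hk⟩ => by subst hk; rfl

lemma card_fiber_eq_countMap (z : Fin N → X) (x : X) :
    Fintype.card {k // z k = x} = (countMap N z).1 x := by
  simp [countMap, Fintype.card_subtype]

lemma card_filter_perm_comp_eq {z z' : Fin N → X} (h : countMap N z' = countMap N z) :
    #{π : Equiv.Perm (Fin N) | z ∘ π = z'} = ∏ x, ((countMap N z).1 x).factorial := by
  rw [← Fintype.card_subtype, Fintype.card_congr (permCompEqEquiv z z'), Fintype.card_pi]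
  refine Finset.prod_congr rfl fun x _ => ?_
  have hcard : Fintype.card {k // z' k = x} = Fintype.card {k // z k = x} := by
    rw [card_fiber_eq_countMap, card_fiber_eq_countMap, h]
  rw [Fintype.card_equiv (Fintype.equivOfCardEq hcard), card_fiber_eq_countMap, h]

lemma sum_perm_comp_eq (f : (Fin N → X) → ℝ) (z : Fin N → X) :
    ∑ π : Equiv.Perm (Fin N), f (z ∘ π) =
      (∏ x, ((countMap N z).1 x).factorial : ℕ) *
        ∑ z' with countMap N z' = countMap N z, f z' := by
  rw [← Finset.sum_fiberwise_of_maps_to (g := fun π : Equiv.Perm (Fin N) => z ∘ π)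
    (t := {z' | countMap N z' = countMap N z}) (fun π _ => by simp [countMap_comp_perm]),
    Finset.mul_sum]
  refine Finset.sum_congr rfl fun z' hz' => ?_
  rw [Finset.sum_congr rfl fun π hπ => congrArg f (Finset.mem_filter.1 hπ).2, Finset.sum_const,
    card_filter_perm_comp_eq (Finset.mem_filter.1 hz').2, nsmul_eq_mul]

lemma factorial_mul_MuHy (f : (Fin N → X) → ℝ) (z : Fin N → X) :
    (N.factorial : ℝ) * MuHy f (countMap N z) = ∑ π : Equiv.Perm (Fin N), f (z ∘ π) := by
  have hν : (nu (countMap N z) : ℝ) ≠ 0 := by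
    exact_mod_cast (Nat.multinomial_pos _ _).ne'
  have hspec : (∏ x, ((countMap N z).1 x).factorial) * nu (countMap N z) = N.factorial := by
    simpa only [nu, (countMap N z).2] using Nat.multinomial_spec Finset.univ (countMap N z).1
  rw [sum_perm_comp_eq, MuHy, ← hspec]
  push_cast
  field_simp

lemma MuHy_neg (f : (Fin N → X) → ℝ) (m : CVec X N) :
    MuHy (fun z => -f z) m = -MuHy f m := by
  simp only [MuHy, Finset.sum_neg_distrib, neg_div]

end Counting

namespace LowerPrevCoherent

variable {Ω : Type*} [Fintype Ω] [Nonempty Ω] {P : (Ω → ℝ) → ℝ}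

lemma map_zero (hP : LowerPrevCoherent P) : P 0 = 0 := by
  simpa [Pi.zero_def] using hP.2.1 0 0 le_rfl

lemma sum_le_map_sum (hP : LowerPrevCoherent P) {ι : Type*} (s : Finset ι) (F : ι → Ω → ℝ) :
    ∑ i ∈ s, P (F i) ≤ P (∑ i ∈ s, F i) := by
  induction s using Finset.cons_induction with
  | empty => simp [hP.map_zero]
  | cons a s ha ih =>
    rw [Finset.sum_cons, Finset.sum_cons]
    exact (add_le_add le_rfl ih).trans (hP.2.2 _ _)

lemma nonneg_const_mul_sum (hP : LowerPrevCoherent P) {ι : Type*} (s : Finset ι) (F : ι → Ω → ℝ)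
    (hF : ∀ i ∈ s, 0 ≤ P (F i)) {c : ℝ} (hc : 0 ≤ c) :
    0 ≤ P (fun ω => c * ∑ i ∈ s, F i ω) := by
  have hsum : 0 ≤ P (∑ i ∈ s, F i) :=
    (Finset.sum_nonneg hF).trans (hP.sum_le_map_sum s F)
  simp_rw [← Finset.sum_apply]
  rw [hP.2.1 _ c hc]
  exact mul_nonneg hc hsum

lemma eq_of_nonneg_sub (hP : LowerPrevCoherent P) {f g : Ω → ℝ}
    (hfg : 0 ≤ P (fun ω => g ω - f ω)) (hgf : 0 ≤ P (fun ω => f ω - g ω)) : P f = P g := by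
  have hf := hP.2.2 f fun ω => g ω - f ω
  have hg := hP.2.2 g fun ω => f ω - g ω
  rw [show (f + fun ω => g ω - f ω) = g by ext; simp] at hf
  rw [show (g + fun ω => f ω - g ω) = f by ext; simp] at hg
  linarith

end LowerPrevCoherent

lemma Exchangeable.nonneg_MuHy_sub {X : Type*} [Fintype X] [DecidableEq X] [Nonempty X] {N : ℕ}
    {P : ((Fin N → X) → ℝ) → ℝ} (hP : LowerPrevCoherent P) (hex : Exchangeable P)
    (f : (Fin N → X) → ℝ) : 0 ≤ P (fun z => MuHy f (countMap N z) - f z) := by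
  have hsym : ∀ z, MuHy f (countMap N z) - f z =
      (N.factorial : ℝ)⁻¹ * ∑ π : Equiv.Perm (Fin N), (f (z ∘ π) - f z) := by
    intro z
    rw [Finset.sum_sub_distrib, ← factorial_mul_MuHy, Finset.sum_const, Finset.card_univ,
      Fintype.card_perm, Fintype.card_fin, nsmul_eq_mul]
    field_simp
  simp_rw [hsym]
  exact hP.nonneg_const_mul_sum Finset.univ (fun (π : Equiv.Perm (Fin N)) z => f (z ∘ π) - f z)
    (fun π _ => hex f π) (by positivity)

theorem stmt4_general {X : Type*} [Fintype X] [DecidableEq X] [Nonempty X] {N : ℕ}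
    (P : ((Fin N → X) → ℝ) → ℝ)
    (hP : LowerPrevCoherent P) (hex : Exchangeable P)
    (Q : (CVec X N → ℝ) → ℝ)
    (hQ : ∀ h : CVec X N → ℝ, Q h = P (fun z => h (countMap N z))) :
    ∀ f : (Fin N → X) → ℝ, P f = Q (fun m => MuHy f m) := by
  intro f
  have hneg := Exchangeable.nonneg_MuHy_sub hP hex fun z => -f z
  simp only [MuHy_neg, sub_neg_eq_add, neg_add_eq_sub] at hneg
  rw [hQ]
  exact hP.eq_of_nonneg_sub (Exchangeable.nonneg_MuHy_sub hP hex f) hneg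

/-- a coherent exchangeable lower prevision is determined by its count
distribution: `P(f) = Q(MuHy^N(f|·))`. -/
theorem stmt4 {X : Type*} [Fintype X] [DecidableEq X] [Nonempty X] {N : ℕ} (hN : 1 ≤ N)
    (P : ((Fin N → X) → ℝ) → ℝ)
    (hP : LowerPrevCoherent P) (hex : Exchangeable P)
    (Q : (CVec X N → ℝ) → ℝ)
    (hQ : ∀ h : CVec X N → ℝ, Q h = P (fun z => h (countMap N z))) :
    ∀ f : (Fin N → X) → ℝ, P f = Q (fun m => MuHy f m) :=
  stmt4_general P hP hex Q hQ
end

section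
/- Let n ≥ 1 and k ≥ 0, let f be a gamble on 𝒳^n and let f̃ be its cylindrical extension to 𝒳^{n+k}, f̃(z₁,…,z_{n+k}) := f(z₁,…,z_n). Then for every m' ∈ 𝒩^{n+k}: MuHy^{n+k}(f̃|m') = Σ_{m∈𝒩^n} (ν(m'−m)·ν(m)/ν(m'))·MuHy^n(f|m), where ν(m'−m) := 0 unless m ≤ m' componentwise. -/
open Finset Filter Topology

/-!
Write a word `z ∈ [μ]` of length `n + k` as `Fin.append w t`, with `w` its first `n` letters.
For fixed `w`, the admissible tails `t` are exactly the words with count vector `μ - T(w)`,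
and there are `ν(μ - T(w))` of them (none unless `T(w) ≤ μ`): the number of words with a given
count vector is a multinomial coefficient, by induction on the length using the Pascal
recursion for multinomials. Hence `∑_{z ∈ [μ]} f̃ z = ∑_m ν(μ - m) ∑_{w ∈ [m]} f w`, and
dividing by `ν(μ)` gives the formula.
-/

namespace Nat

variable {α : Type*} [DecidableEq α] {s : Finset α}

theorem succ_sum_mul_multinomial {x : α} (hx : x ∈ s) (d : α → ℕ) :
    (∑ y ∈ s, d y + 1) * multinomial s d = (d x + 1) * multinomial s (d + Pi.single x 1) := by
  have hx' : x ∉ s.erase x := Finset.notMem_erase x s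
  have hrest : multinomial (s.erase x) (d + Pi.single x 1) = multinomial (s.erase x) d :=
    multinomial_congr fun y hy => by simp [Finset.ne_of_mem_erase hy]
  have hsum : ∑ y ∈ s.erase x, (d + Pi.single x 1 : α → ℕ) y = ∑ y ∈ s.erase x, d y :=
    Finset.sum_congr rfl fun y hy => by simp [Finset.ne_of_mem_erase hy]
  rw [← Finset.insert_erase hx, multinomial_insert hx', multinomial_insert hx',
    Finset.sum_insert hx', hrest, hsum]
  simp only [Pi.add_apply, Pi.single_eq_same]
  rw [add_right_comm (d x) 1, ← mul_assoc, ← mul_assoc, add_one_mul_choose_eq]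
  ring

theorem multinomial_eq_sum_multinomial_sub_single (d : α → ℕ) (hd : 0 < ∑ y ∈ s, d y) :
    multinomial s d = ∑ x ∈ s, if 0 < d x then multinomial s (d - Pi.single x 1) else 0 := by
  refine Nat.eq_of_mul_eq_mul_left hd ?_
  rw [Finset.sum_mul, Finset.mul_sum]
  refine Finset.sum_congr rfl fun x hx => ?_
  split_ifs with hdx
  · have hdx' : (d - Pi.single x 1 : α → ℕ) x + 1 = d x := by
      simp only [Pi.sub_apply, Pi.single_eq_same]
      omega
    have hd' : d - Pi.single x 1 + Pi.single x 1 = d := by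
      funext y
      by_cases hy : y = x
      · subst hy
        simpa using hdx'
      · simp [hy]
    have hsum : ∑ y ∈ s, (d - Pi.single x 1 : α → ℕ) y + 1 = ∑ y ∈ s, d y := by
      conv_rhs => rw [← hd']
      simp [Finset.sum_add_distrib, hx]
    have hrec := succ_sum_mul_multinomial hx (d - Pi.single x 1)
    rw [hd', hsum, hdx'] at hrec
    rw [hrec]
  · simp [Nat.eq_zero_of_not_pos hdx]

end Nat

section Counting

variable {X : Type*} [Fintype X] [DecidableEq X]

theorem countMap_val_eq_sum_single {n : ℕ} (z : Fin n → X) :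
    (countMap n z).1 = ∑ i, Pi.single (z i) 1 := by
  funext x
  simp only [countMap, card_filter, Finset.sum_apply, Pi.single_apply, eq_comm]

theorem countMap_val_cons {k : ℕ} (x : X) (t : Fin k → X) :
    (countMap (k + 1) (Fin.cons x t)).1 = Pi.single x 1 + (countMap k t).1 := by
  simp [countMap_val_eq_sum_single, Fin.sum_univ_succ]

theorem countMap_val_append {n k : ℕ} (w : Fin n → X) (t : Fin k → X) :
    (countMap (n + k) (Fin.append w t)).1 = (countMap n w).1 + (countMap k t).1 := by
  simp [countMap_val_eq_sum_single, Fin.sum_univ_add]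

theorem card_filter_add_countMap_eq (j : ℕ) (a c : X → ℕ) (h : ∑ x, c x = ∑ x, a x + j) :
    #{t : Fin j → X | a + (countMap j t).1 = c} =
      if ∀ x, a x ≤ c x then Nat.multinomial univ (c - a) else 0 := by
  induction j generalizing a with
  | zero =>
    have hcount : ∀ t : Fin 0 → X, (countMap 0 t).1 = 0 := by simp [countMap_val_eq_sum_single]
    simp only [hcount, add_zero]
    by_cases hac : ∀ x, a x ≤ c x
    · have hac' : a = c := funext fun x =>
        (Finset.sum_eq_sum_iff_of_le fun y _ => hac y).1 h.symm x (mem_univ x)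
      subst hac'
      simp [Nat.multinomial]
    · have hac' : a ≠ c := fun h => hac fun x => h ▸ le_rfl
      simp [hac', hac]
  | succ j ih =>
    rw [card_filter, ← (Fin.consEquiv fun _ => X).sum_comp, Fintype.sum_prod_type]
    simp only [Fin.consEquiv, Equiv.coe_fn_mk, countMap_val_cons, ← add_assoc]
    simp only [← card_filter]
    have hstep (x : X) := ih (a + Pi.single x 1) (by simp [sum_add_distrib, h]; ring)
    simp only [hstep]
    split_ifs with hac
    · have hsum : 0 < ∑ y, (c - a) y := by
        simp only [Pi.sub_apply, sum_tsub_distrib univ fun y _ => hac y]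
        omega
      rw [Nat.multinomial_eq_sum_multinomial_sub_single (c - a) hsum]
      refine sum_congr rfl fun x _ => ?_
      have hle : (∀ y, (a + Pi.single x 1 : X → ℕ) y ≤ c y) ↔ 0 < (c - a) x := by
        constructor
        · intro hx
          simpa [Nat.lt_sub_iff_add_lt] using hx x
        · intro hx y
          by_cases hy : y = x
          · subst hy
            simp only [Pi.add_apply, Pi.single_eq_same, Pi.sub_apply] at hx ⊢
            omega
          · simpa [hy] using hac y
      rw [tsub_add_eq_tsub_tsub]
      exact if_congr hle rfl rfl
    · exact sum_eq_zero fun x _ =>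
        if_neg fun hx => hac fun y => (Nat.le_add_right _ _).trans (hx y)

theorem nuSub_eq_card {n k : ℕ} (μ : CVec X (n + k)) (m : CVec X n) :
    nuSub μ m = #{t : Fin k → X | m.1 + (countMap k t).1 = μ.1} := by
  rw [card_filter_add_countMap_eq k m.1 μ.1 (by rw [μ.2, m.2])]
  rfl

theorem sum_atom_cylExt {n k : ℕ} (f : (Fin n → X) → ℝ) (μ : CVec X (n + k)) :
    ∑ z with countMap (n + k) z = μ, cylExt f z =
      ∑ m : CVec X n, (nuSub μ m : ℝ) * ∑ w with countMap n w = m, f w := by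
  have hcyl (w : Fin n → X) (t : Fin k → X) : cylExt f (Fin.append w t) = f w := by
    simp [cylExt]
  calc ∑ z with countMap (n + k) z = μ, cylExt f z
      = ∑ w : Fin n → X, (nuSub μ (countMap n w) : ℝ) * f w := by
        rw [sum_filter, ← (Fin.appendEquiv n k).sum_comp, Fintype.sum_prod_type]
        refine sum_congr rfl fun w _ => ?_
        simp only [Fin.appendEquiv, Equiv.coe_fn_mk, hcyl, Subtype.ext_iff, countMap_val_append,
          nuSub_eq_card]
        rw [← sum_filter, sum_const, nsmul_eq_mul]
    _ = ∑ m : CVec X n, (nuSub μ m : ℝ) * ∑ w with countMap n w = m, f w := by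
        rw [← sum_fiberwise univ (countMap n)]
        refine sum_congr rfl fun m _ => ?_
        rw [mul_sum]
        exact sum_congr rfl fun w hw => by rw [(mem_filter.1 hw).2]

end Counting

theorem stmt7_general {X : Type*} [Fintype X] [DecidableEq X] {n k : ℕ}
    (f : (Fin n → X) → ℝ) (μ : CVec X (n + k)) :
    MuHy (cylExt f : (Fin (n + k) → X) → ℝ) μ =
      ∑ m : CVec X n, ((nuSub μ m : ℝ) * (nu m : ℝ) / (nu μ : ℝ)) * MuHy f m := by
  rw [MuHy, sum_atom_cylExt, sum_div]
  refine sum_congr rfl fun m _ => ?_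
  have hm : (nu m : ℝ) ≠ 0 := Nat.cast_ne_zero.2 (Nat.multinomial_pos _ _).ne'
  rw [MuHy]
  field_simp

/-- the multiple hyper-geometric prevision of a cylindrical extension:
`MuHy^{n+k}(f̃|μ) = ∑_m (ν(μ−m)ν(m)/ν(μ)) MuHy^n(f|m)`. -/
theorem stmt7 {X : Type*} [Fintype X] [DecidableEq X] [Nonempty X] {n k : ℕ} (hn : 1 ≤ n)
    (f : (Fin n → X) → ℝ) (μ : CVec X (n + k)) :
    MuHy (cylExt f : (Fin (n + k) → X) → ℝ) μ =
      ∑ m : CVec X n, ((nuSub μ m : ℝ) * (nu m : ℝ) / (nu μ : ℝ)) * MuHy f m :=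
  stmt7_general f μ
end

section
/- Let (Q^n)_{n≥1} be a time consistent family of coherent lower previsions on ℒ(𝒩^n). Let p : Σ_𝒳 → ℝ, let n₁, n₂ ≥ 1, and suppose b₁ ∈ ℒ(𝒩^{n₁}) and b₂ ∈ ℒ(𝒩^{n₂}) satisfy p(θ) = Σ_{m∈𝒩^{n₁}} b₁(m)B_m(θ) = Σ_{m∈𝒩^{n₂}} b₂(m)B_m(θ) for all θ ∈ Σ_𝒳. Then Q^{n₁}(b₁) = Q^{n₂}(b₂). -/
open Finset Filter Topology

/-! Raising the degree of a Bernstein representation does not change the polynomial: the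
coefficients `gbar g` of degree `n + k` represent `(∑ₓ θₓ)^k · CoMn g θ`, which agrees with
`CoMn g` on the simplex. Time consistency says exactly that `Q` is invariant under degree raising,
so `Q n₁ b₁` and `Q n₂ b₂` are both the value of `Q` at degree `n₁ + n₂` on raised coefficients,
and these raised coefficients coincide because Bernstein coefficients of a fixed degree are
unique: `CoMn g` is homogeneous of degree `n`, so if it vanishes on the simplex it vanishes on the
open positive orthant, and a polynomial vanishing there is zero. -/

theorem nu_pos {X : Type*} [Fintype X] {n : ℕ} (m : CVec X n) : 0 < nu m :=
  Nat.multinomial_pos _ _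

namespace CVec

variable {X : Type*} [Fintype X]

def append {n k : ℕ} (m : CVec X n) (l : CVec X k) : CVec X (n + k) :=
  ⟨m.1 + l.1, by simp [Finset.sum_add_distrib, m.2, l.2]⟩

theorem append_injective {n k : ℕ} (m : CVec X n) : Function.Injective (append (k := k) m) :=
  fun _ _ h => Subtype.ext (add_left_cancel (congrArg Subtype.val h))

theorem nuSub_append {n k : ℕ} (m : CVec X n) (l : CVec X k) : nuSub (append m l) m = nu l := by
  simp [nuSub, append, nu]

theorem nuSub_eq_zero_of_notMem_range {n k : ℕ} {m : CVec X n} {μ : CVec X (n + k)}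
    (hμ : μ ∉ Set.range (append m)) : nuSub μ m = 0 := by
  refine if_neg fun hle => hμ ⟨⟨μ.1 - m.1, ?_⟩, ?_⟩
  · simp only [Pi.sub_apply]
    rw [Finset.sum_tsub_distrib _ fun x _ => hle x, μ.2, m.2, Nat.add_sub_cancel_left]
  · exact Subtype.ext (funext fun x => Nat.add_sub_cancel' (hle x))

variable [DecidableEq X]

theorem sum_nu_mul_prod_pow (k : ℕ) (θ : X → ℝ) :
    ∑ m : CVec X k, (nu m : ℝ) * ∏ x, θ x ^ m.1 x = (∑ x, θ x) ^ k := by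
  rw [Finset.sum_pow_eq_sum_piAntidiag, Finset.sum_subtype (p := fun f : X → ℕ => ∑ x, f x = k)]
  · rfl
  · simp [Finset.mem_piAntidiag]

theorem sum_nuSub_mul_prod_pow {n : ℕ} (k : ℕ) (m : CVec X n) (θ : X → ℝ) :
    ∑ μ : CVec X (n + k), (nuSub μ m : ℝ) * ∏ x, θ x ^ μ.1 x
      = (∏ x, θ x ^ m.1 x) * (∑ x, θ x) ^ k := by
  rw [← sum_nu_mul_prod_pow, Finset.mul_sum]
  symm
  refine Fintype.sum_of_injective (append m) (append_injective m) _ _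
    (fun μ hμ => by simp [nuSub_eq_zero_of_notMem_range hμ]) (fun l => ?_)
  rw [nuSub_append]
  simp only [append, Pi.add_apply, pow_add, Finset.prod_mul_distrib]
  ring

end CVec

section Bernstein

variable {X : Type*} [Fintype X] [DecidableEq X]

theorem CoMn_gbar {n : ℕ} (k : ℕ) (g : CVec X n → ℝ) (θ : X → ℝ) :
    CoMn (gbar (k := k) g) θ = (∑ x, θ x) ^ k * CoMn g θ := by
  have hcancel : ∀ μ : CVec X (n + k), gbar g μ * Bern μ θ
      = ∑ m : CVec X n, g m * nu m * ((nuSub μ m : ℝ) * ∏ x, θ x ^ μ.1 x) := by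
    intro μ
    have hμ : (nu μ : ℝ) ≠ 0 := by exact_mod_cast (nu_pos μ).ne'
    simp only [gbar, Bern, Finset.sum_mul]
    refine Finset.sum_congr rfl fun m _ => ?_
    field_simp
  simp only [CoMn, hcancel]
  rw [Finset.sum_comm, Finset.mul_sum]
  refine Finset.sum_congr rfl fun m _ => ?_
  rw [← Finset.mul_sum, CVec.sum_nuSub_mul_prod_pow, Bern]
  ring

theorem CoMn_smul {n : ℕ} (g : CVec X n → ℝ) (c : ℝ) (θ : X → ℝ) :
    CoMn g (c • θ) = c ^ n * CoMn g θ := by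
  simp only [CoMn, Bern, Pi.smul_apply, smul_eq_mul, mul_pow, Finset.prod_mul_distrib,
    Finset.prod_pow_eq_pow_sum, Finset.mul_sum]
  refine Finset.sum_congr rfl fun m _ => ?_
  rw [m.2]
  ring

noncomputable def CoMnPoly {n : ℕ} (g : CVec X n → ℝ) : MvPolynomial X ℝ :=
  ∑ m : CVec X n, MvPolynomial.monomial (Finsupp.equivFunOnFinite.symm m.1) (g m * nu m)

theorem eval_CoMnPoly {n : ℕ} (g : CVec X n → ℝ) (θ : X → ℝ) :
    MvPolynomial.eval θ (CoMnPoly g) = CoMn g θ := by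
  simp only [CoMnPoly, CoMn, Bern, map_sum, MvPolynomial.eval_monomial]
  refine Finset.sum_congr rfl fun m _ => ?_
  rw [Finsupp.prod_fintype _ _ fun _ => pow_zero _]
  simp [mul_assoc]

theorem coeff_CoMnPoly {n : ℕ} (g : CVec X n → ℝ) (m : CVec X n) :
    (CoMnPoly g).coeff (Finsupp.equivFunOnFinite.symm m.1) = g m * nu m := by
  have hinj : Function.Injective fun m : CVec X n => Finsupp.equivFunOnFinite.symm m.1 :=
    Finsupp.equivFunOnFinite.symm.injective.comp Subtype.val_injective
  simp only [CoMnPoly, MvPolynomial.coeff_sum, MvPolynomial.coeff_monomial, hinj.eq_iff]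
  simp

end Bernstein

section Uniqueness

variable {X : Type*} [Fintype X] [DecidableEq X] [Nonempty X]

theorem CoMn_eq_zero_of_forall_pos {n : ℕ} {g : CVec X n → ℝ} (h : ∀ θ : SimplexPt X, CoMnP g θ = 0)
    {θ : X → ℝ} (hθ : ∀ x, 0 < θ x) : CoMn g θ = 0 := by
  have hs : 0 < ∑ x, θ x := Finset.sum_pos (fun x _ => hθ x) Finset.univ_nonempty
  let θ₀ : SimplexPt X :=
    ⟨(∑ x, θ x)⁻¹ • θ, fun x => smul_nonneg (inv_nonneg.mpr hs.le) (hθ x).le, by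
      simp [← Finset.mul_sum, hs.ne']⟩
  have hθ₀ : θ = (∑ x, θ x) • θ₀.1 := by simp [θ₀, smul_smul, hs.ne']
  rw [hθ₀, CoMn_smul, ← CoMnP, h, mul_zero]

theorem eq_zero_of_CoMnP_eq_zero {n : ℕ} {g : CVec X n → ℝ}
    (h : ∀ θ : SimplexPt X, CoMnP g θ = 0) : g = 0 := by
  have hpoly : CoMnPoly g = 0 :=
    MvPolynomial.funext_set (fun _ => Set.Ioi 0) (fun _ => Set.Ioi_infinite 0) fun θ hθ => by
      rw [eval_CoMnPoly, map_zero, CoMn_eq_zero_of_forall_pos h fun x => hθ x (Set.mem_univ x)]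
  funext m
  have hcoeff := coeff_CoMnPoly g m
  rw [hpoly, MvPolynomial.coeff_zero, eq_comm, mul_eq_zero] at hcoeff
  exact hcoeff.resolve_right (by exact_mod_cast (nu_pos m).ne')

theorem eq_of_CoMnP_eq {n : ℕ} {g h : CVec X n → ℝ}
    (hgh : ∀ θ : SimplexPt X, CoMnP g θ = CoMnP h θ) : g = h := by
  refine sub_eq_zero.mp (eq_zero_of_CoMnP_eq_zero fun θ => ?_)
  have hθ := hgh θ
  simp only [CoMnP, CoMn] at hθ ⊢
  simp [sub_mul, hθ]

end Uniqueness

theorem CoMnP_gbar {X : Type*} [Fintype X] [DecidableEq X] {n : ℕ} (k : ℕ) (g : CVec X n → ℝ)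
    (θ : SimplexPt X) : CoMnP (gbar (k := k) g) θ = CoMnP g θ := by
  rw [CoMnP, CoMn_gbar, θ.2.2, one_pow, one_mul, CoMnP]

theorem apply_eq_of_CoMnP_eq {X : Type*} [Fintype X] [DecidableEq X] [Nonempty X]
    (Q : ∀ n : ℕ, (CVec X n → ℝ) → ℝ) {n n' : ℕ} (hn : n = n') {g : CVec X n → ℝ}
    {g' : CVec X n' → ℝ} (hg : ∀ θ : SimplexPt X, CoMnP g θ = CoMnP g' θ) : Q n g = Q n' g' := by
  subst hn
  rw [eq_of_CoMnP_eq hg]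

theorem QTimeConsistent.eq_gbar {X : Type*} [Fintype X] [DecidableEq X]
    {Q : ∀ n : ℕ, (CVec X n → ℝ) → ℝ} (htc : QTimeConsistent Q) {n : ℕ} (hn : 1 ≤ n) (k : ℕ)
    (g : CVec X n → ℝ) : Q n g = Q (n + k) (gbar g) :=
  (htc n hn k g).trans <| congrArg (Q (n + k)) <| funext fun _ =>
    Finset.sum_congr rfl fun _ _ => by ring

theorem stmt9_general {X : Type*} [Fintype X] [DecidableEq X] [Nonempty X]
    (Q : ∀ n : ℕ, (CVec X n → ℝ) → ℝ)
    (htc : QTimeConsistent Q)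
    (p : SimplexPt X → ℝ) {n₁ n₂ : ℕ} (h₁ : 1 ≤ n₁) (h₂ : 1 ≤ n₂)
    (b₁ : CVec X n₁ → ℝ) (b₂ : CVec X n₂ → ℝ)
    (hb₁ : ∀ θ : SimplexPt X, p θ = CoMnP b₁ θ)
    (hb₂ : ∀ θ : SimplexPt X, p θ = CoMnP b₂ θ) :
    Q n₁ b₁ = Q n₂ b₂ :=
  calc Q n₁ b₁ = Q (n₁ + n₂) (gbar b₁) := htc.eq_gbar h₁ n₂ b₁
    _ = Q (n₂ + n₁) (gbar b₂) := apply_eq_of_CoMnP_eq Q (Nat.add_comm n₁ n₂) fun θ => by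
      rw [CoMnP_gbar, CoMnP_gbar, ← hb₁, ← hb₂]
    _ = Q n₂ b₂ := (htc.eq_gbar h₂ n₁ b₂).symm

/-- for a time consistent family of coherent count lower previsions, the value
assigned to Bernstein coefficient gambles of a common polynomial is independent of the
degree of the representation. -/
theorem stmt9 {X : Type*} [Fintype X] [DecidableEq X] [Nonempty X]
    (Q : ∀ n : ℕ, (CVec X n → ℝ) → ℝ)
    (hcoh : ∀ n : ℕ, 1 ≤ n → LowerPrevCoherent (Q n))
    (htc : QTimeConsistent Q)
    (p : SimplexPt X → ℝ) {n₁ n₂ : ℕ} (h₁ : 1 ≤ n₁) (h₂ : 1 ≤ n₂)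
    (b₁ : CVec X n₁ → ℝ) (b₂ : CVec X n₂ → ℝ)
    (hb₁ : ∀ θ : SimplexPt X, p θ = CoMnP b₁ θ)
    (hb₂ : ∀ θ : SimplexPt X, p θ = CoMnP b₂ θ) :
    Q n₁ b₁ = Q n₂ b₂ :=
  stmt9_general Q htc p h₁ h₂ b₁ b₂ hb₁ hb₂
end

section
/- Let (P^n)_{n≥1} be a time consistent family of coherent exchangeable lower previsions on ℒ(𝒳^n), with count distributions Q^n(h) := P^n(h∘T^n), and let S be the unique coherent lower prevision on 𝒱(Σ_𝒳) with Q^n(g) = S(CoMn^n(g|·)) for all n and g. Then for every continuous function h : Σ_𝒳 → ℝ, the sequence n ↦ Q^n(m ↦ h(m/n)) converges; moreover the limit functional L(h) := lim_{n→∞} Q^n(m ↦ h(m/n)) is a coherent lower prevision on the space of continuous functions on Σ_𝒳, and L(p) = S(p) for every polynomial gamble p ∈ 𝒱(Σ_𝒳). -/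
open Finset Filter Topology

/-!
For `θ` in the simplex the Bernstein weights `B_m(θ)`, `m ∈ 𝒩ⁿ`, are the law of the count vector
of an i.i.d. sample of length `n` drawn from `θ`; in particular `m/n` has mean `θ` and each of its
coordinates has variance at most `1/n`. Chebyshev's inequality then gives the uniform convergence
on the simplex of the Bernstein polynomials `CoMnⁿ(h(·/n)|·)` of a continuous `h` to `h`.
Coherence makes `S` 1-Lipschitz for the sup norm on polynomial gambles, and
`Qⁿ(h(·/n)) = S(CoMnⁿ(h(·/n)|·))`, so these values form a Cauchy sequence and coherence passes to
the limit; for a polynomial gamble `p` the limit is `S p` because the Bernstein polynomials of `p`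
converge uniformly to `p`.
-/

section

variable {X : Type*} [Fintype X] {n : ℕ}

lemma sum_prod_mul_prod (c : Fin n → X → ℝ) (θ : X → ℝ) :
    ∑ z : Fin n → X, (∏ k, c k (z k)) * ∏ k, θ (z k) = ∏ k, ∑ x, c k x * θ x := by
  simp only [← prod_mul_distrib, Fintype.prod_sum]

section

variable {θ : X → ℝ} (hθ : ∑ x, θ x = 1)
include hθ

lemma sum_apply_mul_prod (a : X → ℝ) (i : Fin n) :
    ∑ z : Fin n → X, a (z i) * ∏ k, θ (z k) = ∑ x, a x * θ x := by
  have := sum_prod_mul_prod (fun k x => if k = i then a x else 1) θ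
  simp only [Fintype.prod_ite_eq'] at this
  rw [this, Fintype.prod_eq_single i fun k hk => by simp [hk, hθ]]
  simp

lemma sum_apply_mul_apply_mul_prod_of_ne (a b : X → ℝ) {i j : Fin n} (hij : i ≠ j) :
    ∑ z : Fin n → X, a (z i) * b (z j) * ∏ k, θ (z k) = (∑ x, a x * θ x) * ∑ x, b x * θ x := by
  let c : Fin n → X → ℝ := fun k x => if k = i then a x else if k = j then b x else 1
  have hc : ∀ z : Fin n → X, ∏ k, c k (z k) = a (z i) * b (z j) := fun z => by
    rw [Fintype.prod_eq_mul i j hij fun k hk => by simp [c, hk.1, hk.2]]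
    simp [c, hij.symm]
  have := sum_prod_mul_prod c θ
  rw [Fintype.prod_eq_mul i j hij fun k hk => by simp [c, hk.1, hk.2, hθ]] at this
  simpa [c, hc, hij.symm] using this

lemma sum_sq_sum_apply_mul_prod (a : X → ℝ) (ha : ∑ x, a x * θ x = 0) :
    ∑ z : Fin n → X, (∑ i, a (z i)) ^ 2 * ∏ k, θ (z k) = n * ∑ x, a x ^ 2 * θ x := by
  have hpair : ∀ i j : Fin n, ∑ z : Fin n → X, a (z i) * a (z j) * ∏ k, θ (z k) =
      if i = j then ∑ x, a x ^ 2 * θ x else 0 := by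
    intro i j
    split_ifs with hij
    · subst hij
      simp only [← sq]
      exact sum_apply_mul_prod hθ (fun x => a x ^ 2) i
    · rw [sum_apply_mul_apply_mul_prod_of_ne hθ a a hij, ha, zero_mul]
  calc ∑ z : Fin n → X, (∑ i, a (z i)) ^ 2 * ∏ k, θ (z k)
      = ∑ z : Fin n → X, ∑ i, ∑ j, a (z i) * a (z j) * ∏ k, θ (z k) := by
        simp only [sq, sum_mul, mul_sum]
        exact sum_congr rfl fun z _ => sum_comm
    _ = ∑ i, ∑ j, ∑ z : Fin n → X, a (z i) * a (z j) * ∏ k, θ (z k) := by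
        rw [sum_comm]
        exact sum_congr rfl fun i _ => sum_comm
    _ = n * ∑ x, a x ^ 2 * θ x := by simp [hpair]

lemma sum_comp_tail_mul_prod (F : (Fin n → X) → ℝ) :
    ∑ z : Fin (n + 1) → X, F (Fin.tail z) * ∏ i, θ (z i) = ∑ z, F z * ∏ i, θ (z i) := by
  rw [← (Fin.consEquiv fun _ => X).sum_comp, Fintype.sum_prod_type]
  simp only [Fin.consEquiv, Equiv.coe_fn_mk, Fin.tail_cons, Fin.prod_univ_succ, Fin.cons_zero,
    Fin.cons_succ]
  rw [sum_comm]
  simp only [mul_left_comm _ (θ _), ← sum_mul, hθ, one_mul]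

end

lemma Bern_nonneg (m : CVec X n) (θ : SimplexPt X) : 0 ≤ Bern m θ.1 :=
  mul_nonneg (Nat.cast_nonneg _) (prod_nonneg fun x _ => pow_nonneg (θ.2.1 x) _)

lemma dist_sq_le_sum_sq (f g : X → ℝ) : dist f g ^ 2 ≤ ∑ x, (f x - g x) ^ 2 := by
  have hle : dist f g ≤ √(∑ x, (f x - g x) ^ 2) :=
    (dist_pi_le_iff (Real.sqrt_nonneg _)).mpr fun x => by
      rw [Real.dist_eq]
      exact Real.abs_le_sqrt
        (single_le_sum (f := fun x => (f x - g x) ^ 2) (fun _ _ => sq_nonneg _) (mem_univ x))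
  calc dist f g ^ 2 ≤ √(∑ x, (f x - g x) ^ 2) ^ 2 := pow_le_pow_left₀ dist_nonneg hle 2
    _ = ∑ x, (f x - g x) ^ 2 := Real.sq_sqrt (sum_nonneg fun _ _ => sq_nonneg _)

instance : CompactSpace (SimplexPt X) := stdSimplex.instCompactSpace_coe ℝ X

end

lemma Continuous.exists_abs_sub_le_add_mul_dist_sq {α : Type*} [PseudoMetricSpace α]
    [CompactSpace α] {h : α → ℝ} (hh : Continuous h) {ε : ℝ} (hε : 0 < ε) :
    ∃ c, 0 ≤ c ∧ ∀ a b, |h a - h b| ≤ ε + c * dist a b ^ 2 := by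
  obtain ⟨δ, hδ, hδh⟩ :=
    Metric.uniformContinuous_iff.mp (CompactSpace.uniformContinuous_of_continuous hh) ε hε
  obtain ⟨M, hM⟩ := (isCompact_range (continuous_abs.comp hh)).bddAbove
  refine ⟨2 * |M| / δ ^ 2, by positivity, fun a b => ?_⟩
  have hc : 0 ≤ 2 * |M| / δ ^ 2 * dist a b ^ 2 := by positivity
  rcases lt_or_ge (dist a b) δ with hab | hab
  · have := hδh hab
    rw [Real.dist_eq] at this
    linarith
  · have hbound : |h a - h b| ≤ 2 * |M| := by
      have ha : |h a| ≤ M := hM ⟨a, rfl⟩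
      have hb : |h b| ≤ M := hM ⟨b, rfl⟩
      linarith [abs_sub (h a) (h b), le_abs_self M]
    have hfar : 2 * |M| ≤ 2 * |M| / δ ^ 2 * dist a b ^ 2 := by
      rw [div_mul_eq_mul_div, le_div_iff₀ (by positivity)]
      gcongr
    linarith

section

variable {X : Type*} [Fintype X] [DecidableEq X] {n : ℕ}

instance [Nonempty X] : Nonempty (SimplexPt X) :=
  ⟨⟨_, ite_eq_mem_stdSimplex ℝ (Classical.arbitrary X)⟩⟩

lemma prod_pow_countMap {M : Type*} [CommMonoid M] (f : X → M) (z : Fin n → X) :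
    ∏ x, f x ^ (countMap n z).1 x = ∏ i, f (z i) := by
  rw [← Finset.prod_fiberwise univ z (fun i => f (z i))]
  refine prod_congr rfl fun x _ => ?_
  rw [prod_congr rfl fun i hi => by rw [(mem_filter.mp hi).2], prod_const]
  rfl

/-- Compare the coefficients of `(∑ₓ Xₓ)ⁿ`: expanding the product gives one monomial per word,
the multinomial theorem gives `ν(m)` times the monomial of `m`. -/
lemma card_countMap_fiber (m : CVec X n) : #{z : Fin n → X | countMap n z = m} = nu m := by
  have hexp : (∑ x, MvPolynomial.X x : MvPolynomial X ℕ) ^ n =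
      ∑ z : Fin n → X,
        MvPolynomial.monomial (Finsupp.equivFunOnFinite.symm (countMap n z).1) 1 := by
    rw [← Fin.prod_const, Fintype.prod_sum]
    refine sum_congr rfl fun z _ => ?_
    rw [MvPolynomial.monomial_eq, Finsupp.prod_fintype _ _ (by simp), ← prod_pow_countMap]
    simp
  have := MvPolynomial.coeff_sum_X_pow_of_fintype (R := ℕ) (Finsupp.equivFunOnFinite.symm m.1) n
  rw [hexp, MvPolynomial.coeff_sum] at this
  simp only [MvPolynomial.coeff_monomial, EmbeddingLike.apply_eq_iff_eq, sum_boole, Nat.cast_id,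
    implies_true, Finsupp.sum_fintype, Finsupp.equivFunOnFinite_symm_apply_apply, m.2,
    ↓reduceIte] at this
  rw [nu, ← Finsupp.coe_equivFunOnFinite_symm m.1,
    ← Finsupp.multinomial_eq_of_support_subset (subset_univ _), ← this]
  simp only [Subtype.ext_iff]

lemma MuHy_comp_countMap (g : CVec X n → ℝ) : MuHy (fun z => g (countMap n z)) = g := by
  funext m
  have hfib : ∀ z ∈ ({z | countMap n z = m} : Finset (Fin n → X)), g (countMap n z) = g m :=
    fun z hz => by rw [(mem_filter.mp hz).2]
  have hnu : (nu m : ℝ) ≠ 0 := Nat.cast_ne_zero.mpr (Nat.multinomial_pos _ _).ne'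
  rw [MuHy, sum_congr rfl hfib, sum_const, nsmul_eq_mul, card_countMap_fiber]
  field_simp

lemma CoMn_MuHy (f : (Fin n → X) → ℝ) (θ : X → ℝ) :
    CoMn (MuHy f) θ = ∑ z, f z * ∏ i, θ (z i) := by
  rw [← sum_fiberwise univ (countMap n)]
  refine sum_congr rfl fun m _ => ?_
  have hnu : (nu m : ℝ) ≠ 0 := Nat.cast_ne_zero.mpr (Nat.multinomial_pos _ _).ne'
  have hfib : ∀ z ∈ ({z | countMap n z = m} : Finset (Fin n → X)),
      f z * ∏ i, θ (z i) = f z * ∏ x, θ x ^ m.1 x :=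
    fun z hz => by rw [← prod_pow_countMap, (mem_filter.mp hz).2]
  rw [sum_congr rfl hfib, ← sum_mul, MuHy, Bern]
  field_simp

lemma CoMn_eq_sum (g : CVec X n → ℝ) (θ : X → ℝ) :
    CoMn g θ = ∑ z, g (countMap n z) * ∏ i, θ (z i) := by
  rw [← CoMn_MuHy, MuHy_comp_countMap]

lemma CoMn_add (g₁ g₂ : CVec X n → ℝ) (θ : X → ℝ) :
    CoMn (g₁ + g₂) θ = CoMn g₁ θ + CoMn g₂ θ := by
  simp only [CoMn, Pi.add_apply, add_mul, sum_add_distrib]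

lemma CoMn_sub (g₁ g₂ : CVec X n → ℝ) (θ : X → ℝ) :
    CoMn (g₁ - g₂) θ = CoMn g₁ θ - CoMn g₂ θ := by
  simp only [CoMn, Pi.sub_apply, sub_mul, sum_sub_distrib]

lemma CoMn_const_mul (l : ℝ) (g : CVec X n → ℝ) (θ : X → ℝ) :
    CoMn (fun m => l * g m) θ = l * CoMn g θ := by
  simp only [CoMn, mul_sum, mul_assoc]

lemma sum_Bern {θ : X → ℝ} (hθ : ∑ x, θ x = 1) : ∑ m : CVec X n, Bern m θ = 1 := by
  have h := CoMn_eq_sum (fun _ : CVec X n => (1 : ℝ)) θ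
  simp only [CoMn, one_mul] at h
  rw [h, ← Fintype.prod_sum (fun _ : Fin n => θ), hθ, prod_const_one]

lemma CoMn_sub_const (g : CVec X n → ℝ) (c : ℝ) (θ : SimplexPt X) :
    CoMn g θ.1 - c = ∑ m, (g m - c) * Bern m θ.1 := by
  simp only [sub_mul, sum_sub_distrib, ← mul_sum, sum_Bern θ.2.2, mul_one, CoMn]

lemma abs_CoMn_sub_le (g : CVec X n → ℝ) (c : ℝ) (θ : SimplexPt X) :
    |CoMn g θ.1 - c| ≤ ∑ m, |g m - c| * Bern m θ.1 := by
  rw [CoMn_sub_const]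
  refine (abs_sum_le_sum_abs _ _).trans_eq (sum_congr rfl fun m _ => ?_)
  rw [abs_mul, abs_of_nonneg (Bern_nonneg m θ)]

lemma le_CoMn {g : CVec X n → ℝ} {c : ℝ} (hg : ∀ m, c ≤ g m) (θ : SimplexPt X) :
    c ≤ CoMn g θ.1 := by
  rw [← sub_nonneg, CoMn_sub_const]
  exact sum_nonneg fun m _ => mul_nonneg (sub_nonneg.mpr (hg m)) (Bern_nonneg m θ)

lemma sum_sq_freqPt_sub_mul_Bern_le (hn : 0 < n) (θ : SimplexPt X) (x : X) :
    ∑ m : CVec X n, ((freqPt hn m).1 x - θ.1 x) ^ 2 * Bern m θ.1 ≤ 1 / n := by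
  have hθx : θ.1 x ≤ 1 := (single_le_sum (fun y _ => θ.2.1 y) (mem_univ x)).trans_eq θ.2.2
  let a : X → ℝ := fun y => (if y = x then 1 else 0) - θ.1 x
  have ha : ∑ y, a y * θ.1 y = 0 := by simp [a, sub_mul, ← mul_sum, θ.2.2]
  have ha2 : ∑ y, a y ^ 2 * θ.1 y ≤ 1 := by
    refine (sum_le_sum fun y _ => mul_le_of_le_one_left (θ.2.1 y) ?_).trans_eq θ.2.2
    have := θ.2.1 x
    simp only [a]
    split_ifs <;> nlinarith
  have hcount : ∀ z : Fin n → X, ((countMap n z).1 x : ℝ) / n - θ.1 x = (∑ i, a (z i)) / n := by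
    intro z
    have hn' : (n : ℝ) ≠ 0 := by positivity
    have hc : ((countMap n z).1 x : ℝ) = ∑ i, if z i = x then 1 else 0 := by
      rw [← natCast_card_filter]
      rfl
    simp only [hc, a, sum_sub_distrib, sum_const, card_univ, Fintype.card_fin, nsmul_eq_mul]
    field_simp
  calc ∑ m : CVec X n, ((freqPt hn m).1 x - θ.1 x) ^ 2 * Bern m θ.1
      = ∑ z : Fin n → X, (((countMap n z).1 x : ℝ) / n - θ.1 x) ^ 2 * ∏ i, θ.1 (z i) :=
        CoMn_eq_sum (fun m => ((freqPt hn m).1 x - θ.1 x) ^ 2) θ.1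
    _ = (∑ z : Fin n → X, (∑ i, a (z i)) ^ 2 * ∏ i, θ.1 (z i)) / n ^ 2 := by
        rw [sum_div]
        exact sum_congr rfl fun z _ => by rw [hcount, div_pow, div_mul_eq_mul_div]
    _ = (n * ∑ y, a y ^ 2 * θ.1 y) / n ^ 2 := by rw [sum_sq_sum_apply_mul_prod θ.2.2 a ha]
    _ ≤ 1 / n := by
        have hn' : (0 : ℝ) < n := by exact_mod_cast hn
        rw [div_le_div_iff₀ (by positivity) hn']
        nlinarith

/-- Degree elevation: a gamble on counts of length `N` is read as a gamble on words of length
`N + 1` that ignores the first letter, and `MuHy` turns it back into a gamble on counts. -/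
lemma exists_CoMnP_eq_of_le {N : ℕ} (hnN : n ≤ N) (g : CVec X n → ℝ) :
    ∃ g' : CVec X N → ℝ, CoMnP g' = CoMnP g := by
  induction N, hnN using Nat.le_induction with
  | base => exact ⟨g, rfl⟩
  | succ N _ ih =>
    obtain ⟨g', hg'⟩ := ih
    refine ⟨MuHy fun z => g' (countMap N (Fin.tail z)), funext fun θ => ?_⟩
    rw [← hg']
    show CoMn _ θ.1 = CoMn g' θ.1
    rw [CoMn_MuHy, sum_comp_tail_mul_prod θ.2.2 fun w => g' (countMap N w), CoMn_eq_sum]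

lemma IsPolyGamble.sub {p q : SimplexPt X → ℝ} (hp : IsPolyGamble p) (hq : IsPolyGamble q) :
    IsPolyGamble (p - q) := by
  obtain ⟨n, hn, g, rfl⟩ := hp
  obtain ⟨n', -, g', rfl⟩ := hq
  obtain ⟨G, hG⟩ := exists_CoMnP_eq_of_le (le_max_left n n') g
  obtain ⟨G', hG'⟩ := exists_CoMnP_eq_of_le (le_max_right n n') g'
  refine ⟨max n n', hn.trans (le_max_left _ _), G - G', funext fun θ => ?_⟩
  rw [← hG, ← hG']
  simp only [CoMnP, Pi.sub_apply, CoMn_sub]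

lemma IsPolyGamble.continuous {p : SimplexPt X → ℝ} (hp : IsPolyGamble p) : Continuous p := by
  obtain ⟨n, -, g, rfl⟩ := hp
  have hθ (x : X) : Continuous fun θ : SimplexPt X => θ.1 x :=
    (continuous_apply x).comp continuous_subtype_val
  exact continuous_finsetSum _ fun m _ => continuous_const.mul <|
    continuous_const.mul <| continuous_finsetProd _ fun x _ => (hθ x).pow _

noncomputable def bernsteinApprox (h : SimplexPt X → ℝ) (n : ℕ) : SimplexPt X → ℝ :=
  CoMnP fun m : CVec X (n + 1) => h (freqPt n.succ_pos m)

lemma isPolyGamble_bernsteinApprox (h : SimplexPt X → ℝ) (n : ℕ) :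
    IsPolyGamble (bernsteinApprox h n) :=
  ⟨n + 1, Nat.le_add_left 1 n, _, rfl⟩

lemma bernsteinApprox_add (h g : SimplexPt X → ℝ) (n : ℕ) :
    bernsteinApprox (h + g) n = bernsteinApprox h n + bernsteinApprox g n :=
  funext fun θ => CoMn_add _ _ θ.1

lemma bernsteinApprox_const_mul (l : ℝ) (h : SimplexPt X → ℝ) (n : ℕ) :
    bernsteinApprox (fun θ => l * h θ) n = fun θ => l * bernsteinApprox h n θ :=
  funext fun θ => CoMn_const_mul l _ θ.1

lemma sInf_range_le_bernsteinApprox {h : SimplexPt X → ℝ} (hh : Continuous h) (n : ℕ)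
    (θ : SimplexPt X) : sInf (Set.range h) ≤ bernsteinApprox h n θ :=
  le_CoMn (fun _ => csInf_le (isCompact_range hh).bddBelow ⟨_, rfl⟩) θ

lemma abs_bernsteinApprox_sub_le {h : SimplexPt X → ℝ} {ε c : ℝ}
    (hc : ∀ η θ, |h η - h θ| ≤ ε + c * dist η θ ^ 2) (hc0 : 0 ≤ c) (n : ℕ) (θ : SimplexPt X) :
    |bernsteinApprox h n θ - h θ| ≤ ε + c * Fintype.card X / (n + 1) := by
  set w : CVec X (n + 1) → ℝ := fun m => Bern m θ.1
  set η : CVec X (n + 1) → SimplexPt X := freqPt n.succ_pos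
  calc |bernsteinApprox h n θ - h θ| ≤ ∑ m, |h (η m) - h θ| * w m := abs_CoMn_sub_le _ _ θ
    _ ≤ ∑ m, (ε + c * ∑ x, ((η m).1 x - θ.1 x) ^ 2) * w m := by
        refine sum_le_sum fun m _ => mul_le_mul_of_nonneg_right ?_ (Bern_nonneg m θ)
        refine (hc _ _).trans ?_
        gcongr
        rw [Subtype.dist_eq]
        exact dist_sq_le_sum_sq _ _
    _ = ε + c * ∑ x, ∑ m, ((η m).1 x - θ.1 x) ^ 2 * w m := by
        simp only [add_mul, sum_add_distrib, ← mul_sum, w, sum_Bern θ.2.2, mul_one, mul_assoc,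
          sum_mul]
        rw [sum_comm]
    _ ≤ ε + c * ∑ _x : X, 1 / ((n : ℝ) + 1) := by
        gcongr with x
        exact_mod_cast sum_sq_freqPt_sub_mul_Bern_le n.succ_pos θ x
    _ = ε + c * Fintype.card X / (n + 1) := by
        rw [sum_const, card_univ, nsmul_eq_mul]
        ring

lemma tendstoUniformly_bernsteinApprox {h : SimplexPt X → ℝ} (hh : Continuous h) :
    TendstoUniformly (bernsteinApprox h) h atTop := by
  rw [Metric.tendstoUniformly_iff]
  intro ε hε
  obtain ⟨c, hc0, hc⟩ := hh.exists_abs_sub_le_add_mul_dist_sq (half_pos hε)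
  obtain ⟨N, hN⟩ := exists_nat_gt (2 * c * Fintype.card X / ε)
  filter_upwards [eventually_ge_atTop N] with n hn θ
  rw [dist_comm, Real.dist_eq]
  refine (abs_bernsteinApprox_sub_le hc hc0 n θ).trans_lt ?_
  have hn' : 2 * c * Fintype.card X < ε * (n + 1) := by
    rw [div_lt_iff₀ hε] at hN
    have : (N : ℝ) ≤ n := by exact_mod_cast hn
    nlinarith
  have : c * Fintype.card X / (n + 1) < ε / 2 := by
    rw [div_lt_iff₀ (by positivity)]
    linarith
  linarith

namespace CoherentOnPoly

variable [Nonempty X] {S : (SimplexPt X → ℝ) → ℝ} (hS : CoherentOnPoly S)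
include hS

lemma sub_le_of_abs_sub_le {p q : SimplexPt X → ℝ} (hp : IsPolyGamble p) (hq : IsPolyGamble q)
    {C : ℝ} (hC : ∀ θ, |p θ - q θ| ≤ C) : S q - S p ≤ C := by
  have hsuper : S q + S (p - q) ≤ S p := by
    simpa using hS.2.2 q (p - q) hq (hp.sub hq)
  have hinf : -C ≤ sInf (Set.range (p - q)) :=
    le_csInf (Set.range_nonempty _) <| Set.forall_mem_range.mpr fun θ => neg_le_of_abs_le (hC θ)
  linarith [hS.1 _ (hp.sub hq)]

lemma abs_sub_le_of_abs_sub_le {p q : SimplexPt X → ℝ} (hp : IsPolyGamble p) (hq : IsPolyGamble q)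
    {C : ℝ} (hC : ∀ θ, |p θ - q θ| ≤ C) : |S p - S q| ≤ C :=
  abs_sub_le_iff.mpr ⟨hS.sub_le_of_abs_sub_le hq hp fun θ => abs_sub_comm (q θ) (p θ) ▸ hC θ,
    hS.sub_le_of_abs_sub_le hp hq hC⟩

lemma cauchySeq_of_tendstoUniformly {p : ℕ → SimplexPt X → ℝ} {f : SimplexPt X → ℝ}
    (hp : ∀ n, IsPolyGamble (p n)) (hpf : TendstoUniformly p f atTop) :
    CauchySeq fun n => S (p n) := by
  rw [Metric.cauchySeq_iff']
  intro ε hε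
  obtain ⟨N, hN⟩ :=
    eventually_atTop.mp (Metric.tendstoUniformly_iff.mp hpf (ε / 3) (by positivity))
  refine ⟨N, fun n hn => ?_⟩
  rw [Real.dist_eq]
  refine (hS.abs_sub_le_of_abs_sub_le (C := 2 * ε / 3) (hp n) (hp N) fun θ => ?_).trans_lt
    (by linarith)
  have hn := hN n hn θ
  have hN' := hN N le_rfl θ
  rw [Real.dist_eq] at hn hN'
  calc |p n θ - p N θ| ≤ |p n θ - f θ| + |f θ - p N θ| := abs_sub_le _ _ _
    _ ≤ 2 * ε / 3 := by rw [abs_sub_comm]; linarith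

lemma tendsto_of_tendstoUniformly {p : ℕ → SimplexPt X → ℝ} {f : SimplexPt X → ℝ}
    (hp : ∀ n, IsPolyGamble (p n)) (hf : IsPolyGamble f) (hpf : TendstoUniformly p f atTop) :
    Tendsto (fun n => S (p n)) atTop (𝓝 (S f)) := by
  rw [Metric.tendsto_atTop]
  intro ε hε
  obtain ⟨N, hN⟩ :=
    eventually_atTop.mp (Metric.tendstoUniformly_iff.mp hpf (ε / 2) (half_pos hε))
  refine ⟨N, fun n hn => ?_⟩
  rw [Real.dist_eq]
  refine (hS.abs_sub_le_of_abs_sub_le (hp n) hf fun θ => ?_).trans_lt (half_lt_self hε)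
  rw [abs_sub_comm, ← Real.dist_eq]
  exact (hN n hn θ).le

end CoherentOnPoly

noncomputable def bernsteinLimit (S : (SimplexPt X → ℝ) → ℝ) (h : SimplexPt X → ℝ) : ℝ :=
  limUnder atTop fun n => S (bernsteinApprox h n)

section

variable [Nonempty X] {S : (SimplexPt X → ℝ) → ℝ} (hS : CoherentOnPoly S)
include hS

lemma tendsto_bernsteinLimit {h : SimplexPt X → ℝ} (hh : Continuous h) :
    Tendsto (fun n => S (bernsteinApprox h n)) atTop (𝓝 (bernsteinLimit S h)) :=
  (hS.cauchySeq_of_tendstoUniformly (isPolyGamble_bernsteinApprox h)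
    (tendstoUniformly_bernsteinApprox hh)).tendsto_limUnder

lemma bernsteinLimit_eq {p : SimplexPt X → ℝ} (hp : IsPolyGamble p) : bernsteinLimit S p = S p :=
  (hS.tendsto_of_tendstoUniformly (isPolyGamble_bernsteinApprox p) hp
    (tendstoUniformly_bernsteinApprox hp.continuous)).limUnder_eq

lemma sInf_range_le_bernsteinLimit {h : SimplexPt X → ℝ} (hh : Continuous h) :
    sInf (Set.range h) ≤ bernsteinLimit S h := by
  refine ge_of_tendsto' (tendsto_bernsteinLimit hS hh) fun n => ?_
  refine le_trans ?_ (hS.1 _ (isPolyGamble_bernsteinApprox h n))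
  exact le_csInf (Set.range_nonempty _) <|
    Set.forall_mem_range.mpr (sInf_range_le_bernsteinApprox hh n)

lemma bernsteinLimit_const_mul {h : SimplexPt X → ℝ} (hh : Continuous h) {l : ℝ} (hl : 0 ≤ l) :
    bernsteinLimit S (fun θ => l * h θ) = l * bernsteinLimit S h := by
  refine (((tendsto_bernsteinLimit hS hh).const_mul l).congr fun n => ?_).limUnder_eq
  rw [bernsteinApprox_const_mul, hS.2.1 _ (isPolyGamble_bernsteinApprox h n) l hl]

lemma bernsteinLimit_add_le {h g : SimplexPt X → ℝ} (hh : Continuous h) (hg : Continuous g) :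
    bernsteinLimit S h + bernsteinLimit S g ≤ bernsteinLimit S (h + g) := by
  refine le_of_tendsto_of_tendsto' ((tendsto_bernsteinLimit hS hh).add
    (tendsto_bernsteinLimit hS hg)) (tendsto_bernsteinLimit hS (hh.add hg)) fun n => ?_
  rw [bernsteinApprox_add]
  exact hS.2.2 _ _ (isPolyGamble_bernsteinApprox h n) (isPolyGamble_bernsteinApprox g n)

end

end

theorem stmt12_general {X : Type*} [Fintype X] [DecidableEq X] [Nonempty X]
    (Q : ∀ n : ℕ, (CVec X n → ℝ) → ℝ)
    (S : (SimplexPt X → ℝ) → ℝ)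
    (hS : CoherentOnPoly S ∧
      ∀ n : ℕ, 1 ≤ n → ∀ g : CVec X n → ℝ, Q n g = S (CoMnP g)) :
    ∃ L : (SimplexPt X → ℝ) → ℝ,
      (∀ h : SimplexPt X → ℝ, Continuous h →
        Tendsto (fun n : ℕ => Q (n + 1) (fun m => h (freqPt n.succ_pos m))) atTop
          (𝓝 (L h))) ∧
      ((∀ h : SimplexPt X → ℝ, Continuous h → sInf (Set.range h) ≤ L h) ∧
       (∀ h : SimplexPt X → ℝ, Continuous h → ∀ l : ℝ, 0 ≤ l →
          L (fun θ => l * h θ) = l * L h) ∧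
       (∀ h g : SimplexPt X → ℝ, Continuous h → Continuous g → L h + L g ≤ L (h + g))) ∧
      (∀ p : SimplexPt X → ℝ, IsPolyGamble p → L p = S p) := by
  obtain ⟨hS, hQS⟩ := hS
  refine ⟨bernsteinLimit S, fun h hh => ?_,
    ⟨fun h hh => sInf_range_le_bernsteinLimit hS hh,
      fun h hh l hl => bernsteinLimit_const_mul hS hh hl,
      fun h g hh hg => bernsteinLimit_add_le hS hh hg⟩,
    fun p hp => bernsteinLimit_eq hS hp⟩
  exact (tendsto_bernsteinLimit hS hh).congr fun n => (hQS _ (Nat.le_add_left 1 n) _).symm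

/-- convergence in distribution of the sample frequencies: for every
continuous `h` on the simplex, `Q^n(h(·/n))` converges; the limit functional `L` is a
coherent lower prevision on the continuous gambles and coincides with `S` on `𝒱(Σ_X)`. -/
theorem stmt12 {X : Type*} [Fintype X] [DecidableEq X] [Nonempty X]
    (P : ∀ n : ℕ, ((Fin n → X) → ℝ) → ℝ)
    (hP : ∀ n : ℕ, 1 ≤ n → LowerPrevCoherent (P n) ∧ Exchangeable (P n))
    (htc : PTimeConsistent P)
    (Q : ∀ n : ℕ, (CVec X n → ℝ) → ℝ)
    (hQ : ∀ (n : ℕ) (h : CVec X n → ℝ), Q n h = P n (fun z => h (countMap n z)))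
    (S : (SimplexPt X → ℝ) → ℝ)
    (hS : CoherentOnPoly S ∧
      ∀ n : ℕ, 1 ≤ n → ∀ g : CVec X n → ℝ, Q n g = S (CoMnP g)) :
    ∃ L : (SimplexPt X → ℝ) → ℝ,
      (∀ h : SimplexPt X → ℝ, Continuous h →
        Tendsto (fun n : ℕ => Q (n + 1) (fun m => h (freqPt n.succ_pos m))) atTop
          (𝓝 (L h))) ∧
      ((∀ h : SimplexPt X → ℝ, Continuous h → sInf (Set.range h) ≤ L h) ∧
       (∀ h : SimplexPt X → ℝ, Continuous h → ∀ l : ℝ, 0 ≤ l →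
          L (fun θ => l * h θ) = l * L h) ∧
       (∀ h g : SimplexPt X → ℝ, Continuous h → Continuous g → L h + L g ≤ L (h + g))) ∧
      (∀ p : SimplexPt X → ℝ, IsPolyGamble p → L p = S p) :=
  stmt12_general Q S hS
end
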